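/- Let z ∈ ℝ, q > 0, 0 < L < ∞, and let e : ℝ → ℝ satisfy e(x) = 0 for all |x| ≥ q and |e(x) − e(y)| ≤ L|x − y| for all x, y; set b(x) = x + z + e(x). Let K be a finite constant with |φ(u) − φ(v)| ≤ K|u − v| for all u, v, where φ is the standard normal density. Let ψ ∈ ℝ, let X ~ N(ψ,1), and let R be a positive random variable independent of X with E(R²) = 1 and E(|R − 1| R²) < ∞. Then | (E[R·b(X/R) + R·b(−X/R)] − 2z E(R)) − (E[b(X) + b(−X)] − 2z) | ≤ 4 L K q³ E(|R − 1| R²), and this bound does not depend on ψ. -/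

import Mathlib

/-!
Write `s(x) = e(x) + e(-x)`, so that `b(x) + b(-x) = 2z + s(x)`,
`r b(x/r) + r b(-x/r) = 2zr + r s(x/r)`, and `s` is continuous, bounded by
`2Lq` and supported in `[-q, q]`. Substituting `x = r u` in the Gaussian integral gives
`E[r s(X/r)] = r² ∫ φ(r u - ψ) s(u) du`, while `E[s(X)] = ∫ φ(u - ψ) s(u) du`. Since `φ` is
`K`-Lipschitz, the two integrands differ by at most `K |r - 1| q · 2Lq` on an interval of
length `2q`; as `E(R²) = 1`, averaging `r² E[s(X)]` over `R` gives back `E[s(X)]`.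
-/

open MeasureTheory ProbabilityTheory Real

noncomputable def stdNormalPDF (u : ℝ) : ℝ :=
  (Real.sqrt (2 * π))⁻¹ * Real.exp (-u ^ 2 / 2)

lemma integral_gaussianReal_one_eq (ψ : ℝ) (g : ℝ → ℝ) :
    ∫ x, g x ∂gaussianReal ψ 1 = ∫ x, stdNormalPDF (x - ψ) * g x := by
  rw [integral_gaussianReal_eq_integral_smul one_ne_zero]
  congr with x
  simp [gaussianPDFReal, stdNormalPDF]

lemma abs_le_mul_of_lipschitz_of_vanishing {e : ℝ → ℝ} {q L : ℝ} (hq : 0 < q)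
    (he_zero : ∀ x, q ≤ |x| → e x = 0) (he_lip : ∀ x y, |e x - e y| ≤ L * |x - y|) (x : ℝ) :
    |e x| ≤ L * q := by
  have hLq : 0 ≤ L * q := by
    simpa [abs_of_pos hq] using (abs_nonneg _).trans (he_lip q 0)
  rcases le_or_gt q |x| with hx | hx
  · rw [he_zero x hx, abs_zero]
    exact hLq
  have hL : 0 ≤ L := nonneg_of_mul_nonneg_left hLq hq
  obtain ⟨y, hy, hxy⟩ : ∃ y, q ≤ |y| ∧ |x - y| ≤ q := by
    rcases abs_lt.1 hx with ⟨hx₁, hx₂⟩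
    rcases le_total 0 x with h | h
    · exact ⟨q, (abs_of_pos hq).ge, abs_le.2 ⟨by linarith, by linarith⟩⟩
    · exact ⟨-q, by rw [abs_neg, abs_of_pos hq], abs_le.2 ⟨by linarith, by linarith⟩⟩
  calc |e x| = |e x - e y| := by rw [he_zero y hy, sub_zero]
    _ ≤ L * |x - y| := he_lip x y
    _ ≤ L * q := by gcongr

lemma abs_integral_le_of_abs_le_of_eq_zero {f : ℝ → ℝ} {C q : ℝ} (hq : 0 ≤ q)
    (hf_bd : ∀ x, |f x| ≤ C) (hf_zero : ∀ x, q ≤ |x| → f x = 0) :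
    |∫ x, f x| ≤ C * (2 * q) := by
  have hle : ∀ x, ‖f x‖ ≤ Set.indicator (Set.Icc (-q) q) (fun _ => C) x := by
    intro x
    by_cases hx : x ∈ Set.Icc (-q) q
    · simpa [hx] using hf_bd x
    · simp [hx, hf_zero x (not_le.1 fun h => hx (Set.mem_Icc.2 (abs_le.1 h))).le]
  have hint : Integrable (Set.indicator (Set.Icc (-q) q) (fun _ => C)) :=
    (integrable_indicator_iff measurableSet_Icc).2 (integrableOn_const isCompact_Icc.measure_ne_top)
  calc |∫ x, f x| ≤ ∫ x, Set.indicator (Set.Icc (-q) q) (fun _ => C) x :=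
        norm_integral_le_of_norm_le hint (Filter.Eventually.of_forall hle)
    _ = C * (2 * q) := by
        rw [integral_indicator_const _ measurableSet_Icc, volume_real_Icc_of_le (by linarith),
          smul_eq_mul]
        ring

lemma integral_mul_comp_div_gaussianReal {s : ℝ → ℝ} {r : ℝ} (ψ : ℝ) (hr : 0 < r) :
    ∫ x, r * s (x / r) ∂gaussianReal ψ 1 = r ^ 2 * ∫ u, stdNormalPDF (r * u - ψ) * s u := by
  calc ∫ x, r * s (x / r) ∂gaussianReal ψ 1
      = r * ∫ x, stdNormalPDF (r * (x / r) - ψ) * s (x / r) := by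
        rw [integral_gaussianReal_one_eq, ← integral_const_mul]
        congr with x
        rw [mul_div_cancel₀ _ hr.ne']
        ring
    _ = r ^ 2 * ∫ u, stdNormalPDF (r * u - ψ) * s u := by
        rw [Measure.integral_comp_div (fun u => stdNormalPDF (r * u - ψ) * s u) r, smul_eq_mul,
          abs_of_pos hr]
        ring

lemma abs_integral_mul_comp_div_gaussianReal_sub_le {s : ℝ → ℝ} {q M K r : ℝ} (ψ : ℝ) (hq : 0 ≤ q)
    (hs : Continuous s) (hs_bd : ∀ u, |s u| ≤ M) (hs_zero : ∀ u, q ≤ |u| → s u = 0)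
    (hK : ∀ u v, |stdNormalPDF u - stdNormalPDF v| ≤ K * |u - v|) (hr : 0 < r) :
    |∫ x, r * s (x / r) ∂gaussianReal ψ 1 - r ^ 2 * ∫ x, s x ∂gaussianReal ψ 1|
      ≤ r ^ 2 * (K * |r - 1| * q * M * (2 * q)) := by
  have hM : 0 ≤ M := (abs_nonneg _).trans (hs_bd 0)
  have hK0 : 0 ≤ K := by simpa using (abs_nonneg _).trans (hK 1 0)
  have hs_supp : HasCompactSupport s := HasCompactSupport.intro isCompact_Icc fun u hu =>
    hs_zero u (not_le.1 fun h => hu (Set.mem_Icc.2 (abs_le.1 h))).le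
  have hint : ∀ c, Integrable fun u => stdNormalPDF (c * u - ψ) * s u := fun c =>
    ((by unfold stdNormalPDF; fun_prop : Continuous fun u => stdNormalPDF (c * u - ψ)).mul
      hs).integrable_of_hasCompactSupport hs_supp.mul_left
  have hdiff : ∀ u, |stdNormalPDF (r * u - ψ) * s u - stdNormalPDF (u - ψ) * s u|
      ≤ K * |r - 1| * q * M := by
    intro u
    rcases le_or_gt q |u| with hu | hu
    · rw [hs_zero u hu, mul_zero, mul_zero, sub_self, abs_zero]
      positivity
    rw [← sub_mul, abs_mul]
    gcongr
    · calc |stdNormalPDF (r * u - ψ) - stdNormalPDF (u - ψ)|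
          ≤ K * |(r * u - ψ) - (u - ψ)| := hK _ _
        _ = K * |r - 1| * |u| := by
          rw [show r * u - ψ - (u - ψ) = (r - 1) * u by ring, abs_mul, mul_assoc]
        _ ≤ K * |r - 1| * q := by gcongr
    · exact hs_bd u
  rw [integral_mul_comp_div_gaussianReal ψ hr, integral_gaussianReal_one_eq, ← mul_sub,
    ← integral_sub (hint r) (by simpa using hint 1), abs_mul, abs_of_nonneg (sq_nonneg r)]
  gcongr
  exact abs_integral_le_of_abs_le_of_eq_zero hq hdiff fun u hu => by rw [hs_zero u hu]; ring

lemma abs_integral_sub_le_of_ae_abs_sub_le {α : Type*} [MeasurableSpace α] {ρ : Measure α}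
    {I w g : α → ℝ} {H : ℝ} (hI : Integrable I ρ) (hw : Integrable w ρ) (hw_one : ∫ r, w r ∂ρ = 1)
    (hg : Integrable g ρ) (hle : ∀ᵐ r ∂ρ, |I r - w r * H| ≤ g r) :
    |∫ r, I r ∂ρ - H| ≤ ∫ r, g r ∂ρ := by
  have hH : H = ∫ r, w r * H ∂ρ := by rw [integral_mul_const, hw_one, one_mul]
  rw [hH, ← integral_sub hI (hw.mul_const H), ← Real.norm_eq_abs]
  exact norm_integral_le_of_norm_le hg hle

lemma integrable_snd_mul_comp_div {μ ρ : Measure ℝ} [IsFiniteMeasure μ] [SFinite ρ]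
    {s : ℝ → ℝ} {M : ℝ} (hs : Measurable s) (hs_bd : ∀ u, |s u| ≤ M)
    (hρ : Integrable (fun r => r) ρ) :
    Integrable (fun p : ℝ × ℝ => p.2 * s (p.1 / p.2)) (μ.prod ρ) := by
  refine ((hρ.comp_snd μ).abs.mul_const M).mono' (by fun_prop) (ae_of_all _ fun p => ?_)
  rw [Real.norm_eq_abs, abs_mul]
  exact mul_le_mul_of_nonneg_left (hs_bd _) (abs_nonneg _)

theorem statement13_general
    (z : ℝ) (q : ℝ) (hq : 0 < q) (L : ℝ)
    (e : ℝ → ℝ)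
    (he_zero : ∀ x : ℝ, q ≤ |x| → e x = 0)
    (he_lip : ∀ x y : ℝ, |e x - e y| ≤ L * |x - y|)
    (b : ℝ → ℝ) (hb : ∀ x, b x = x + z + e x)
    (K : ℝ) (hK : ∀ u v : ℝ, |stdNormalPDF u - stdNormalPDF v| ≤ K * |u - v|)
    (ρ : Measure ℝ) [IsProbabilityMeasure ρ]
    (hρ_pos : ∀ᵐ r ∂ρ, 0 < r)
    (hρ_mom2 : Integrable (fun r : ℝ => r ^ 2) ρ)
    (hρ_mom2_one : (∫ r, r ^ 2 ∂ρ) = 1)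
    (hρ_mom3 : Integrable (fun r : ℝ => |r - 1| * r ^ 2) ρ)
    (ψ : ℝ) :
    |((∫ p, (p.2 * b (p.1 / p.2) + p.2 * b (-(p.1 / p.2)))
          ∂(gaussianReal ψ 1).prod ρ) - 2 * z * ∫ r, r ∂ρ) -
        ((∫ x, (b x + b (-x)) ∂gaussianReal ψ 1) - 2 * z)| ≤
      4 * L * K * q ^ 3 * ∫ r, |r - 1| * r ^ 2 ∂ρ := by
  set s : ℝ → ℝ := fun x => e x + e (-x)
  have he_bd := abs_le_mul_of_lipschitz_of_vanishing hq he_zero he_lip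
  have hs_bd : ∀ x, |s x| ≤ 2 * (L * q) := fun x =>
    (abs_add_le _ _).trans (by linarith [he_bd x, he_bd (-x)])
  have hs_zero : ∀ x, q ≤ |x| → s x = 0 := fun x hx => by
    simp only [s, he_zero x hx, he_zero (-x) (by rwa [abs_neg]), add_zero]
  have hs_cont : Continuous s := by
    have := (LipschitzWith.of_dist_le' (f := e) fun x y => he_lip x y).continuous
    fun_prop
  have hρ_mom1 : Integrable (fun r : ℝ => r) ρ :=
    ((memLp_two_iff_integrable_sq aestronglyMeasurable_id).2 hρ_mom2).integrable one_le_two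
  have hprod := integrable_snd_mul_comp_div (μ := gaussianReal ψ 1) hs_cont.measurable hs_bd
    hρ_mom1
  have hmixed : ∫ p, (p.2 * b (p.1 / p.2) + p.2 * b (-(p.1 / p.2))) ∂(gaussianReal ψ 1).prod ρ
      = 2 * z * ∫ r, r ∂ρ + ∫ r, ∫ x, r * s (x / r) ∂gaussianReal ψ 1 ∂ρ := by
    simp_rw [hb, show ∀ r y : ℝ, r * (y + z + e y) + r * (-y + z + e (-y)) = 2 * z * r + r * s y
      from fun r y => by ring]
    rw [integral_add ((hρ_mom1.comp_snd _).const_mul _) hprod, integral_const_mul,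
      integral_fun_snd (fun r : ℝ => r), integral_prod_symm _ hprod]
    simp
  have hplain : ∫ x, (b x + b (-x)) ∂gaussianReal ψ 1 = 2 * z + ∫ x, s x ∂gaussianReal ψ 1 := by
    simp_rw [hb, show ∀ y : ℝ, y + z + e y + (-y + z + e (-y)) = 2 * z + s y
      from fun y => by ring]
    rw [integral_add (integrable_const _)
      (.of_bound hs_cont.aestronglyMeasurable _ (ae_of_all _ hs_bd))]
    simp
  rw [hmixed, hplain, add_sub_cancel_left, add_sub_cancel_left, ← integral_const_mul]
  refine abs_integral_sub_le_of_ae_abs_sub_le hprod.integral_prod_right hρ_mom2 hρ_mom2_one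
    (hρ_mom3.const_mul _) ?_
  filter_upwards [hρ_pos] with r hr
  calc _ ≤ r ^ 2 * (K * |r - 1| * q * (2 * (L * q)) * (2 * q)) :=
        abs_integral_mul_comp_div_gaussianReal_sub_le ψ hq.le hs_cont hs_bd hs_zero hK hr
    _ = _ := by ring

/-- For `b(x) = x + z + e(x)` with `e` `L`-Lipschitz and vanishing outside
`[-q, q]`, `K` a Lipschitz constant for the standard normal density `φ`, `X ~ N(ψ,1)` and
`R > 0` (a.s.) independent of `X` with law `ρ`, `E(R²) = 1` and `E(|R−1| R²) < ∞`:
`|(E[R b(X/R) + R b(-X/R)] − 2z E(R)) − (E[b(X) + b(-X)] − 2z)| ≤ 4 L K q³ E(|R−1| R²)`,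
a bound not depending on `ψ`. -/
theorem statement13
    (z : ℝ) (q : ℝ) (hq : 0 < q) (L : ℝ) (hL : 0 < L)
    (e : ℝ → ℝ)
    (he_zero : ∀ x : ℝ, q ≤ |x| → e x = 0)
    (he_lip : ∀ x y : ℝ, |e x - e y| ≤ L * |x - y|)
    (b : ℝ → ℝ) (hb : ∀ x, b x = x + z + e x)
    (K : ℝ) (hK : ∀ u v : ℝ, |stdNormalPDF u - stdNormalPDF v| ≤ K * |u - v|)
    (ρ : Measure ℝ) [IsProbabilityMeasure ρ]
    (hρ_pos : ∀ᵐ r ∂ρ, 0 < r)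
    (hρ_mom2 : Integrable (fun r : ℝ => r ^ 2) ρ)
    (hρ_mom2_one : (∫ r, r ^ 2 ∂ρ) = 1)
    (hρ_mom3 : Integrable (fun r : ℝ => |r - 1| * r ^ 2) ρ)
    (ψ : ℝ) :
    |((∫ p, (p.2 * b (p.1 / p.2) + p.2 * b (-(p.1 / p.2)))
          ∂(gaussianReal ψ 1).prod ρ) - 2 * z * ∫ r, r ∂ρ) -
        ((∫ x, (b x + b (-x)) ∂gaussianReal ψ 1) - 2 * z)| ≤
      4 * L * K * q ^ 3 * ∫ r, |r - 1| * r ^ 2 ∂ρ :=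
  statement13_general z q hq L e he_zero he_lip b hb K hK ρ hρ_pos hρ_mom2 hρ_mom2_one hρ_mom3 ψ
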